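/- Let ((V,E), f) be a signal over a finite connected graph with a fixed G-ordering ≺. Then there exists a unique rooted tree T = (V, E_T) on the vertex set V, rooted at the ≺-minimal vertex, such that for every non-root vertex v there exists an edge e ∈ E with: v is the ≺-minimum of the connected component of v in the subgraph G_{≺e} (all vertices and edges strictly preceding e), and the parent p(v) of v in T is the ≺-minimum of the connected component of v in the subgraph G_{⪯e} (all vertices and edges up to and including e). -/

import Mathlib

open scoped Classical

/-- A (multi)graph given by source and target maps on an edge type. -/
structure SigGraph (V E : Type*) where
  src : E → V
  tgt : E → V

namespace SigGraph

variable {V E : Type*} (G : SigGraph V E)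

/-- `e` is an edge joining `x` and `y`. -/
def Ends (e : E) (x y : V) : Prop :=
  (G.src e = x ∧ G.tgt e = y) ∨ (G.src e = y ∧ G.tgt e = x)

/-- The graph is connected. -/
def Connected : Prop :=
  ∀ a b : V, Relation.ReflTransGen (fun x y => ∃ e, G.Ends e x y) a b

/-- Extension of a vertex signal to vertices and edges, `f(e) = max f(V(e))`. -/
def sig (f : V → ℝ) : V ⊕ E → ℝ
  | .inl v => f v
  | .inr e => max (f (G.src e)) (f (G.tgt e))

/-- `pos` realizes a `G`-ordering: a total ordering of `V ⊕ E` along which the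
signal is nondecreasing and every vertex precedes each edge incident to it. -/
def IsGOrdering (f : V → ℝ) (pos : V ⊕ E → ℕ) : Prop :=
  Function.Injective pos ∧
  (∀ a b, pos a ≤ pos b → G.sig f a ≤ G.sig f b) ∧
  (∀ e : E, pos (.inl (G.src e)) < pos (.inr e) ∧ pos (.inl (G.tgt e)) < pos (.inr e))

/-- Connectivity within the subgraph `G_{<k}` of elements with position `< k`. -/
def ConnB (pos : V ⊕ E → ℕ) (k : ℕ) (a b : V) : Prop :=
  pos (.inl a) < k ∧ pos (.inl b) < k ∧
    Relation.ReflTransGen (fun x y => ∃ e, pos (.inr e) < k ∧ G.Ends e x y) a b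

/-- `m` is the `≺`-minimum of the connected component of `v` in `G_{<k}`. -/
def IsCompMin (pos : V ⊕ E → ℕ) (k : ℕ) (m v : V) : Prop :=
  G.ConnB pos k m v ∧ ∀ w, G.ConnB pos k v w → pos (.inl m) ≤ pos (.inl w)

/-- The `≺`-maximal endpoint of an edge. -/
def maxEnd (pos : V ⊕ E → ℕ) (e : E) : V :=
  if pos (.inl (G.src e)) ≤ pos (.inl (G.tgt e)) then G.tgt e else G.src e

/-- `(p, L)` is a basin hierarchy tree of the signal `(G, f)` with respect to the
`G`-ordering `pos`, rooted at the `≺`-minimal vertex `r`, with linking-vertex map `L`. -/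
structure IsBHT (f : V → ℝ) (pos : V ⊕ E → ℕ) (r : V) (p : V → V) (L : V → V) : Prop where
  ordering : G.IsGOrdering f pos
  root_min : ∀ v, pos (.inl r) ≤ pos (.inl v)
  root_fix : p r = r
  reaches : ∀ v, ∃ n, p^[n] v = r
  spec : ∀ v, v ≠ r → ∃ e : E,
    G.IsCompMin pos (pos (.inr e)) v v ∧
    G.IsCompMin pos (pos (.inr e) + 1) (p v) v ∧
    L v = G.maxEnd pos e

end SigGraph

/-- `u` is an ancestor of `v` in the tree with parent map `p` (`u ⪯_T v`). -/
def Anc {V : Type*} (p : V → V) (u v : V) : Prop := ∃ n, p^[n] v = u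

/-- `f(𝔏(v))`, with value `+∞` at the root. -/
noncomputable def fLink {V : Type*} (f : V → ℝ) (r : V) (L : V → V) (v : V) : EReal :=
  if v = r then ⊤ else (f (L v) : EReal)

/-- The persistence `pers(v) = f(𝔏(v)) - f(v)` of a vertex in a BHT. -/
noncomputable def persBHT {V : Type*} (f : V → ℝ) (r : V) (L : V → V) (v : V) : EReal :=
  fLink f r L v - (f v : EReal)

namespace SigGraph

variable {V E : Type*} (G : SigGraph V E)

/-- The component of `v` dies at the edge `e`: `v` is the minimum of its component
just before `e` is added, and no longer after. -/
def DiesAt (pos : V ⊕ E → ℕ) (v : V) (e : E) : Prop :=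
  G.IsCompMin pos (pos (.inr e)) v v ∧ ¬ G.IsCompMin pos (pos (.inr e) + 1) v v

/-- The death value of the component created by `v` (`+∞` if permanent). -/
noncomputable def deathVal (f : V → ℝ) (pos : V ⊕ E → ℕ) (v : V) : EReal :=
  if h : ∃ e, G.DiesAt pos v e then ((G.sig f (.inr h.choose) : ℝ) : EReal) else ⊤

/-- The degree-0 persistence diagram of `(G, f)`, as a multiset of intervals
`[birth, death)` (including trivial intervals). -/
noncomputable def PD0 [Fintype V] (f : V → ℝ) (pos : V ⊕ E → ℕ) : Multiset (EReal × EReal) :=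
  Finset.univ.val.map fun v : V => ((f v : EReal), G.deathVal f pos v)

end SigGraph

/-- The nontrivial part of a multiset of intervals. -/
noncomputable def nontriv (M : Multiset (EReal × EReal)) : Multiset (EReal × EReal) :=
  M.filter fun ab => ab.1 < ab.2

/-- The 0-low-persistence filter associated to a BHT `(p, L)` rooted at `r`. -/
noncomputable def LPF {V : Type*} [Fintype V] (f : V → ℝ) (r : V) (p L : V → V)
    (ε : ℝ) (v : V) : ℝ :=
  (insert (f v) ((Finset.univ.filter fun u => Anc p u v ∧ persBHT f r L u < (ε : EReal)).image
    fun u => f (L u))).max' (Finset.insert_nonempty _ _)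


/-!
Adding the elements of `V ⊕ E` one at a time in the order `≺`, a vertex `v` is the minimum
of its component from the moment it appears until the first edge `e` merging that component
with one of smaller minimum; since components only grow, `v` never becomes a minimum again, so
this death edge is unique. The conditions on the tree force `p v ≠ v` for `v ≠ r`, hence `v`
must die at the edge `e` of the condition and `p v` must be the minimum of the merged
component, which pins `p` down. Conversely, by connectivity every `v ≠ r` dies, and the
minimum after its death has smaller position than `v`, so iterating `p` descends to `r`.
-/

theorem Function.exists_iterate_eq_of_lt {α : Type*} {p : α → α} {r : α} (μ : α → ℕ)
    (h : ∀ v, v ≠ r → μ (p v) < μ v) (v : α) : ∃ n, p^[n] v = r := by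
  induction v using (measure μ).wf.induction with
  | _ v ih =>
    by_cases hv : v = r
    · exact ⟨0, hv⟩
    · obtain ⟨n, hn⟩ := ih (p v) (h v hv)
      exact ⟨n + 1, hn⟩

namespace SigGraph

variable {V E : Type*} {G : SigGraph V E} {pos : V ⊕ E → ℕ} {k : ℕ} {v w m : V} {e : E}

def VerticesPrecedeEdges (G : SigGraph V E) (pos : V ⊕ E → ℕ) : Prop :=
  ∀ e : E, pos (.inl (G.src e)) < pos (.inr e) ∧ pos (.inl (G.tgt e)) < pos (.inr e)

theorem IsGOrdering.verticesPrecedeEdges {f : V → ℝ} (h : G.IsGOrdering f pos) :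
    G.VerticesPrecedeEdges pos :=
  h.2.2

theorem Ends.symm (h : G.Ends e v w) : G.Ends e w v :=
  Or.symm h

theorem VerticesPrecedeEdges.lt_of_ends (hinc : G.VerticesPrecedeEdges pos) (h : G.Ends e v w) :
    pos (.inl v) < pos (.inr e) := by
  rcases h with ⟨rfl, -⟩ | ⟨-, rfl⟩
  exacts [(hinc e).1, (hinc e).2]

theorem VerticesPrecedeEdges.lt_of_reflTransGen (hinc : G.VerticesPrecedeEdges pos)
    (h : Relation.ReflTransGen (fun x y => ∃ e, pos (.inr e) < k ∧ G.Ends e x y) v w)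
    (hv : pos (.inl v) < k) : pos (.inl w) < k := by
  induction h with
  | refl => exact hv
  | tail _ hstep _ =>
    obtain ⟨e, hek, he⟩ := hstep
    exact (hinc.lt_of_ends he.symm).trans hek

theorem connB_refl (hv : pos (.inl v) < k) : G.ConnB pos k v v :=
  ⟨hv, hv, .refl⟩

theorem ConnB.symm (h : G.ConnB pos k v w) : G.ConnB pos k w v :=
  ⟨h.2.1, h.1, Relation.ReflTransGen.mono (fun _ _ ⟨e, hek, he⟩ => ⟨e, hek, he.symm⟩) _ _
    (Relation.reflTransGen_swap.mpr h.2.2)⟩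

theorem ConnB.mono {k' : ℕ} (hk : k ≤ k') (h : G.ConnB pos k v w) : G.ConnB pos k' v w :=
  ⟨h.1.trans_le hk, h.2.1.trans_le hk,
    Relation.ReflTransGen.mono (fun _ _ ⟨e, hek, he⟩ => ⟨e, hek.trans_le hk, he⟩) _ _
      h.2.2⟩

theorem exists_connB (h : Relation.ReflTransGen (fun x y => ∃ e, G.Ends e x y) v w) :
    ∃ k, G.ConnB pos k v w := by
  induction h with
  | refl => exact ⟨_, connB_refl (Nat.lt_succ_self _)⟩
  | @tail x y _ hstep ih =>
    obtain ⟨e, he⟩ := hstep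
    obtain ⟨k, hk⟩ := ih
    set k' := max k (max (pos (.inr e)) (pos (.inl y))) + 1
    have hkk' : k ≤ k' := by omega
    exact ⟨k', (hk.mono hkk').1, by omega, (hk.mono hkk').2.2.tail ⟨e, by omega, he⟩⟩

theorem exists_isCompMin (hv : pos (.inl v) < k) : ∃ m, G.IsCompMin pos k m v := by
  obtain ⟨m, hm, hmin⟩ := (measure fun w => pos (.inl w)).wf.has_min {w | G.ConnB pos k v w}
    ⟨v, connB_refl hv⟩
  exact ⟨m, ConnB.symm hm, fun w hw => not_lt.mp (hmin w hw)⟩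

theorem IsCompMin.unique (hinj : Function.Injective pos) {m' : V}
    (h : G.IsCompMin pos k m v) (h' : G.IsCompMin pos k m' v) : m = m' :=
  Sum.inl_injective <| hinj <| le_antisymm (h.2 m' h'.1.symm) (h'.2 m h.1.symm)

theorem IsCompMin.of_le {k' : ℕ} (h : G.IsCompMin pos k v v) (hv : pos (.inl v) < k')
    (hk : k' ≤ k) : G.IsCompMin pos k' v v :=
  ⟨connB_refl hv, fun w hw => h.2 w (hw.mono hk)⟩

theorem isCompMin_succ_self (hinc : G.VerticesPrecedeEdges pos) (v : V) :
    G.IsCompMin pos (pos (.inl v) + 1) v v := by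
  refine ⟨connB_refl (Nat.lt_succ_self _), fun w ⟨_, _, hpath⟩ => ?_⟩
  rcases hpath.cases_head with rfl | ⟨_, ⟨e, hek, he⟩, _⟩
  · exact le_rfl
  · have := hinc.lt_of_ends he
    omega

theorem IsCompMin.succ_of_forall_ne (hinc : G.VerticesPrecedeEdges pos)
    (hk : ∀ e : E, pos (.inr e) ≠ k) (h : G.IsCompMin pos k v v) :
    G.IsCompMin pos (k + 1) v v := by
  refine ⟨connB_refl (by have := h.1.1; omega), fun w ⟨_, _, hpath⟩ => h.2 w ?_⟩
  have hpath' : Relation.ReflTransGen (fun x y => ∃ e, pos (.inr e) < k ∧ G.Ends e x y) v w :=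
    Relation.ReflTransGen.mono
      (fun _ _ ⟨e, hek, he⟩ => ⟨e, lt_of_le_of_ne (Nat.lt_succ_iff.mp hek) (hk e), he⟩)
      _ _ hpath
  exact ⟨h.1.1, hinc.lt_of_reflTransGen hpath' h.1.1, hpath'⟩

theorem exists_diesAt_of_not_isCompMin (hinc : G.VerticesPrecedeEdges pos)
    (hv : pos (.inl v) < k) (h : ¬ G.IsCompMin pos k v v) : ∃ e, G.DiesAt pos v e := by
  induction k with
  | zero => omega
  | succ k ih =>
    rcases (Nat.lt_succ_iff.mp hv).eq_or_lt with hvk | hvk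
    · exact absurd (hvk ▸ isCompMin_succ_self hinc v) h
    · by_cases hmin : G.IsCompMin pos k v v
      · by_contra hnone
        refine h (hmin.succ_of_forall_ne hinc fun e he => hnone ⟨e, ?_⟩)
        exact ⟨he ▸ hmin, he ▸ h⟩
      · exact ih hvk hmin

theorem Connected.exists_diesAt (hG : G.Connected) (hinj : Function.Injective pos)
    (hinc : G.VerticesPrecedeEdges pos) {r : V} (hr : ∀ v, pos (.inl r) ≤ pos (.inl v))
    (hv : v ≠ r) : ∃ e, G.DiesAt pos v e := by
  obtain ⟨k, hk⟩ := exists_connB (pos := pos) (hG v r)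
  refine exists_diesAt_of_not_isCompMin hinc hk.1 fun hmin => hv ?_
  exact Sum.inl_injective <| hinj <| le_antisymm (hmin.2 r hk) (hr v)

theorem IsCompMin.diesAt (h : G.IsCompMin pos (pos (.inr e)) v v)
    (hinj : Function.Injective pos) (hm : G.IsCompMin pos (pos (.inr e) + 1) m v)
    (hmv : m ≠ v) : G.DiesAt pos v e :=
  ⟨h, fun hv => hmv (hm.unique hinj hv)⟩

theorem DiesAt.le_of_isCompMin (h : G.DiesAt pos v e) (h' : G.IsCompMin pos k v v) :
    k ≤ pos (.inr e) :=
  not_lt.mp fun hk => h.2 (h'.of_le (h.1.1.1.trans (Nat.lt_succ_self _)) hk)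

theorem DiesAt.unique (hinj : Function.Injective pos) {e' : E} (h : G.DiesAt pos v e)
    (h' : G.DiesAt pos v e') : e = e' :=
  Sum.inr_injective <| hinj <| le_antisymm (h'.le_of_isCompMin h.1) (h.le_of_isCompMin h'.1)

theorem DiesAt.lt_of_isCompMin (hinj : Function.Injective pos) (h : G.DiesAt pos v e)
    (hm : G.IsCompMin pos (pos (.inr e) + 1) m v) : pos (.inl m) < pos (.inl v) := by
  refine lt_of_le_of_ne (hm.2 v (connB_refl (h.1.1.1.trans (Nat.lt_succ_self _)))) fun hmv => ?_
  obtain rfl : m = v := Sum.inl_injective (hinj hmv)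
  exact h.2 hm

end SigGraph

theorem bht_exists_unique_general {V E : Type*}
    (G : SigGraph V E) (hG : G.Connected) (f : V → ℝ) (pos : V ⊕ E → ℕ)
    (hpos : G.IsGOrdering f pos) (r : V) (hr : ∀ v, pos (.inl r) ≤ pos (.inl v)) :
    ∃! p : V → V,
      p r = r ∧ (∀ v, ∃ n : ℕ, p^[n] v = r) ∧
      ∀ v, v ≠ r → ∃ e : E,
        G.IsCompMin pos (pos (.inr e)) v v ∧
        G.IsCompMin pos (pos (.inr e) + 1) (p v) v := by
  have hinj := hpos.1
  have hinc := hpos.verticesPrecedeEdges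
  choose e he using fun v (hv : v ≠ r) => hG.exists_diesAt hinj hinc hr hv
  choose m hm using fun v (hv : v ≠ r) =>
    SigGraph.exists_isCompMin (G := G) ((he v hv).1.1.1.trans (Nat.lt_succ_self _))
  let p v := if hv : v = r then r else m v hv
  have hp : ∀ v (hv : v ≠ r), p v = m v hv := fun v hv => dif_neg hv
  have hpr : p r = r := dif_pos rfl
  refine ⟨p, ⟨hpr, Function.exists_iterate_eq_of_lt (fun v => pos (.inl v))
    fun v hv => hp v hv ▸ (he v hv).lt_of_isCompMin hinj (hm v hv),
    fun v hv => ⟨e v hv, (he v hv).1, hp v hv ▸ hm v hv⟩⟩, ?_⟩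
  rintro q ⟨hqr, hqreach, hq⟩
  funext v
  by_cases hv : v = r
  · rw [hv, hqr, hpr]
  obtain ⟨e', he'v, hqv⟩ := hq v hv
  have hqv_ne : q v ≠ v := fun hfix => hv <| by
    obtain ⟨n, hn⟩ := hqreach v
    rwa [Function.iterate_fixed hfix] at hn
  obtain rfl : e' = e v hv := (he'v.diesAt hinj hqv hqv_ne).unique hinj (he v hv)
  rw [hp v hv]
  exact hqv.unique hinj (hm v hv)

/-- Existence and uniqueness of the Basin Hierarchy Tree: given a signal over a
finite connected graph with a `G`-ordering `pos` and `≺`-minimal vertex `r`, there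
is a unique rooted tree on `V` (given by its parent map `p`, rooted at `r`) such
that every non-root vertex `v` is, for some edge `e`, the `≺`-minimum of its
connected component in `G_{≺e}`, while `p v` is the `≺`-minimum of the connected
component of `v` in `G_{⪯e}`. -/
theorem bht_exists_unique {V E : Type*} [Fintype V] [Fintype E]
    (G : SigGraph V E) (hG : G.Connected) (f : V → ℝ) (pos : V ⊕ E → ℕ)
    (hpos : G.IsGOrdering f pos) (r : V) (hr : ∀ v, pos (.inl r) ≤ pos (.inl v)) :
    ∃! p : V → V,
      p r = r ∧ (∀ v, ∃ n : ℕ, p^[n] v = r) ∧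
      ∀ v, v ≠ r → ∃ e : E,
        G.IsCompMin pos (pos (.inr e)) v v ∧
        G.IsCompMin pos (pos (.inr e) + 1) (p v) v :=
  bht_exists_unique_general G hG f pos hpos r hr
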